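/- For every ε > 0 and integers n ≥ 2, k ≥ 2, there exists a randomized mechanism M that maps each weighted graph G on a fixed n-element vertex set V with k distinct terminals s₁, …, s_k to a probability distribution over multiway k-cuts of G, such that (i) M is (ε, 0)-differentially private with respect to edge-neighboring graphs, and (ii) there is an absolute constant C such that for every input graph G, with probability at least 1 − 1/n, the multiway k-cut output by M has weight in G at most 2·OPT + C·n·log(k)/ε, where OPT is the minimum weight of a multiway k-cut of G. -/

import Mathlib

/-!
Run the exponential mechanism on the (at most `k ^ n`) multiway cuts, sampling a cut `C` with
probability proportional to `exp (-ε w(C) / 2)`. Changing one edge weight by at most `1` changes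
every cut weight by at most `1`, so numerators and normaliser each move by a factor at most
`exp (ε / 2)`: the mechanism is `ε`-differentially private. A cut of weight above `OPT + t` has
probability at most `exp (-ε t / 2)`, so by a union bound over the cuts, `t = 4 n log k / ε`
leaves a failure probability of at most `k ^ n · k ^ (-2n) ≤ 1 / n`. Finally `OPT ≥ 0`, so
`OPT + t ≤ 2 OPT + t`.
-/
open Finset

/-- A valid weight function of a weighted graph: nonnegative, symmetric and zero
on the diagonal. -/
def IsWeight {V : Type} (w : V → V → ℝ) : Prop :=
  (∀ u v, 0 ≤ w u v) ∧ (∀ u v, w u v = w v u) ∧ (∀ u, w u u = 0)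

/-- Two weight functions on the same vertex set are (edge-)neighboring if they agree on
all but one unordered pair of vertices, where they differ by at most `1`. -/
def Neighboring {V : Type} (w w' : V → V → ℝ) : Prop :=
  ∃ a b : V, |w a b - w' a b| ≤ 1 ∧
    ∀ u v, ¬((u = a ∧ v = b) ∨ (u = b ∧ v = a)) → w u v = w' u v

/-- `C` is a multiway `k`-cut for the terminals `ts 0, …, ts (k−1)`: there are pairwise
disjoint sets `P i` covering `V` with `ts i ∈ P i`, and `C` is exactly the set of
unordered pairs joining two different parts. -/
def IsMultiwayCut {V : Type} [Fintype V] [DecidableEq V] {k : ℕ} (ts : Fin k → V)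
    (C : Finset (Sym2 V)) : Prop :=
  ∃ P : Fin k → Finset V,
    (∀ i j, i ≠ j → Disjoint (P i) (P j)) ∧
    (∀ i, ts i ∈ P i) ∧
    Finset.univ.biUnion P = Finset.univ ∧
    (↑C : Set (Sym2 V)) =
      {p | ∃ u v : V, ∃ i j : Fin k, p = s(u, v) ∧ i ≠ j ∧ u ∈ P i ∧ v ∈ P j}

/-- The total weight of a set of unordered vertex pairs (for a symmetric weight
function vanishing on the diagonal, this is the sum of the weights of the pairs). -/
noncomputable def pairsWeight {V : Type} [Fintype V] [DecidableEq V] (w : V → V → ℝ)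
    (C : Finset (Sym2 V)) : ℝ :=
  (1 / 2) * ∑ u : V, ∑ v : V, if s(u, v) ∈ C then w u v else 0

open scoped ENNReal

lemma PMF.one_sub_toOuterMeasure_compl_le {α : Type*} (p : PMF α) (s : Set α) :
    1 - p.toOuterMeasure sᶜ ≤ p.toOuterMeasure s := by
  rw [tsub_le_iff_right, ← (p.toOuterMeasure_apply_eq_one_iff Set.univ).2 (Set.subset_univ _)]
  exact MeasureTheory.measure_univ_le_add_compl s

section ExponentialMechanism

variable {α : Type*} {ε : ℝ} {S : Finset α} {q q' : α → ℝ}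

open Classical in
noncomputable def expWeight (ε : ℝ) (S : Finset α) (q : α → ℝ) (a : α) : ℝ≥0∞ :=
  if a ∈ S then ENNReal.ofReal (Real.exp (-(ε / 2) * q a)) else 0

lemma tsum_expWeight (ε : ℝ) (S : Finset α) (q : α → ℝ) :
    ∑' a, expWeight ε S q a = ∑ a ∈ S, ENNReal.ofReal (Real.exp (-(ε / 2) * q a)) :=
  (tsum_eq_sum fun _ ha => if_neg ha).trans (sum_congr rfl fun _ ha => if_pos ha)

lemma tsum_expWeight_ne_zero (ε : ℝ) (hS : S.Nonempty) (q : α → ℝ) :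
    ∑' a, expWeight ε S q a ≠ 0 := by
  obtain ⟨a, ha⟩ := hS
  rw [tsum_expWeight, Ne, sum_eq_zero_iff, not_forall]
  exact ⟨a, fun h => (ENNReal.ofReal_pos.2 (Real.exp_pos _)).ne' (h ha)⟩

lemma tsum_expWeight_ne_top (ε : ℝ) (S : Finset α) (q : α → ℝ) :
    ∑' a, expWeight ε S q a ≠ ∞ := by
  rw [tsum_expWeight]
  exact ENNReal.sum_ne_top.2 fun _ _ => ENNReal.ofReal_ne_top

noncomputable def expMechanism (ε : ℝ) (S : Finset α) (hS : S.Nonempty) (q : α → ℝ) : PMF α :=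
  PMF.normalize (expWeight ε S q) (tsum_expWeight_ne_zero ε hS q) (tsum_expWeight_ne_top ε S q)

lemma support_expMechanism_subset (hS : S.Nonempty) : (expMechanism ε S hS q).support ⊆ S := by
  intro a ha
  by_contra haS
  rw [expMechanism, PMF.mem_support_normalize_iff, expWeight] at ha
  exact ha (if_neg haS)

lemma expWeight_le_of_abs_sub_le (hε : 0 ≤ ε) (hq : ∀ a ∈ S, |q a - q' a| ≤ 1) (a : α) :
    expWeight ε S q a ≤ ENNReal.ofReal (Real.exp (ε / 2)) * expWeight ε S q' a := by
  unfold expWeight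
  split_ifs with ha
  · rw [← ENNReal.ofReal_mul (Real.exp_nonneg _), ← Real.exp_add]
    gcongr
    nlinarith [abs_le.1 (hq a ha)]
  · simp

lemma expMechanism_le_of_abs_sub_le (hε : 0 ≤ ε) (hS : S.Nonempty)
    (hq : ∀ a ∈ S, |q a - q' a| ≤ 1) (a : α) :
    expMechanism ε S hS q a ≤ ENNReal.ofReal (Real.exp ε) * expMechanism ε S hS q' a := by
  set c := ENNReal.ofReal (Real.exp (ε / 2))
  have hc0 : c ≠ 0 := (ENNReal.ofReal_pos.2 (Real.exp_pos _)).ne'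
  have hZ : ∑' b, expWeight ε S q' b ≤ c * ∑' b, expWeight ε S q b := by
    rw [← ENNReal.tsum_mul_left]
    exact ENNReal.tsum_le_tsum
      (expWeight_le_of_abs_sub_le hε fun b hb => abs_sub_comm (q b) (q' b) ▸ hq b hb)
  have hZinv : (∑' b, expWeight ε S q b)⁻¹ ≤ c * (∑' b, expWeight ε S q' b)⁻¹ := by
    rw [ENNReal.inv_le_iff_inv_le, ENNReal.mul_inv (Or.inl hc0) (Or.inl ENNReal.ofReal_ne_top),
      inv_inv, ← ENNReal.div_eq_inv_mul, ENNReal.div_le_iff hc0 ENNReal.ofReal_ne_top, mul_comm]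
    exact hZ
  have hcc : c * c = ENNReal.ofReal (Real.exp ε) := by
    rw [← ENNReal.ofReal_mul (Real.exp_nonneg _), ← Real.exp_add, add_halves]
  rw [expMechanism, expMechanism, PMF.normalize_apply, PMF.normalize_apply, ← hcc]
  calc expWeight ε S q a * (∑' b, expWeight ε S q b)⁻¹
      ≤ (c * expWeight ε S q' a) * (c * (∑' b, expWeight ε S q' b)⁻¹) :=
        mul_le_mul' (expWeight_le_of_abs_sub_le hε hq a) hZinv
    _ = c * c * (expWeight ε S q' a * (∑' b, expWeight ε S q' b)⁻¹) := by ring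

lemma toOuterMeasure_expMechanism_le_of_abs_sub_le (hε : 0 ≤ ε) (hS : S.Nonempty)
    (hq : ∀ a ∈ S, |q a - q' a| ≤ 1) (O : Set α) :
    (expMechanism ε S hS q).toOuterMeasure O ≤
      ENNReal.ofReal (Real.exp ε) * (expMechanism ε S hS q').toOuterMeasure O := by
  rw [PMF.toOuterMeasure_apply, PMF.toOuterMeasure_apply, ← ENNReal.tsum_mul_left]
  refine ENNReal.tsum_le_tsum fun a => ?_
  by_cases ha : a ∈ O
  · simpa [ha] using expMechanism_le_of_abs_sub_le hε hS hq a
  · simp [ha]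

lemma expMechanism_le_exp_neg_sub (hS : S.Nonempty) {a₀ : α} (ha₀ : a₀ ∈ S) (a : α) :
    expMechanism ε S hS q a ≤ ENNReal.ofReal (Real.exp (-(ε / 2) * (q a - q a₀))) := by
  rw [expMechanism, PMF.normalize_apply, expWeight]
  split_ifs with ha
  · have hZ : ENNReal.ofReal (Real.exp (-(ε / 2) * q a₀)) ≤ ∑' b, expWeight ε S q b := by
      rw [tsum_expWeight]
      exact single_le_sum (fun _ _ => zero_le (α := ℝ≥0∞)) ha₀
    calc ENNReal.ofReal (Real.exp (-(ε / 2) * q a)) * (∑' b, expWeight ε S q b)⁻¹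
        ≤ ENNReal.ofReal (Real.exp (-(ε / 2) * q a)) *
            ENNReal.ofReal (Real.exp (-(ε / 2) * q a₀))⁻¹ := by
          gcongr
          rwa [ENNReal.ofReal_inv_of_pos (Real.exp_pos _), ENNReal.inv_le_inv]
      _ = ENNReal.ofReal (Real.exp (-(ε / 2) * (q a - q a₀))) := by
          rw [← ENNReal.ofReal_mul (Real.exp_nonneg _), ← Real.exp_neg, ← Real.exp_add]
          ring_nf
  · simp

lemma toOuterMeasure_expMechanism_lt_le (hε : 0 ≤ ε) (hS : S.Nonempty) {a₀ : α} (ha₀ : a₀ ∈ S)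
    (t : ℝ) :
    (expMechanism ε S hS q).toOuterMeasure {a | q a₀ + t < q a} ≤
      S.card * ENNReal.ofReal (Real.exp (-(ε / 2) * t)) := by
  classical
  let bad := S.filter fun a => q a₀ + t < q a
  calc (expMechanism ε S hS q).toOuterMeasure {a | q a₀ + t < q a}
      ≤ (expMechanism ε S hS q).toOuterMeasure bad := by
        refine PMF.toOuterMeasure_mono _ fun a ⟨hat, ha⟩ => ?_
        exact mem_filter.2 ⟨support_expMechanism_subset hS ha, hat⟩
    _ = ∑ a ∈ bad, expMechanism ε S hS q a := PMF.toOuterMeasure_apply_finset _ _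
    _ ≤ ∑ _a ∈ bad, ENNReal.ofReal (Real.exp (-(ε / 2) * t)) := by
        refine sum_le_sum fun a ha => (expMechanism_le_exp_neg_sub hS ha₀ a).trans ?_
        refine ENNReal.ofReal_le_ofReal (Real.exp_le_exp.2 ?_)
        nlinarith [(mem_filter.1 ha).2]
    _ ≤ S.card * ENNReal.ofReal (Real.exp (-(ε / 2) * t)) := by
        rw [sum_const, nsmul_eq_mul]
        gcongr
        exact filter_subset _ _

lemma one_sub_le_toOuterMeasure_expMechanism_le (hε : 0 ≤ ε) (hS : S.Nonempty) {a₀ : α}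
    (ha₀ : a₀ ∈ S) (t : ℝ) :
    1 - S.card * ENNReal.ofReal (Real.exp (-(ε / 2) * t)) ≤
      (expMechanism ε S hS q).toOuterMeasure {a | q a ≤ q a₀ + t} := by
  refine le_trans ?_ (PMF.one_sub_toOuterMeasure_compl_le _ _)
  gcongr
  simpa only [Set.compl_ofPred, not_le] using toOuterMeasure_expMechanism_lt_le hε hS ha₀ t

end ExponentialMechanism

section MultiwayCut

variable {V : Type} [Fintype V] {k : ℕ}

def labellingCut (f : V → Fin k) : Finset (Sym2 V) :=
  univ.filter fun p => ¬ (p.map f).IsDiag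

lemma setOf_crossing_eq_labellingCut (P : Fin k → Finset V) (f : V → Fin k)
    (hP : ∀ v i, v ∈ P i ↔ f v = i) :
    {p | ∃ u v : V, ∃ i j : Fin k, p = s(u, v) ∧ i ≠ j ∧ u ∈ P i ∧ v ∈ P j} =
      (labellingCut f : Set (Sym2 V)) := by
  ext p
  induction p using Sym2.ind with
  | _ u v =>
    simp only [labellingCut, Set.mem_ofPred_eq, coe_filter, mem_univ, true_and, Sym2.map_mk,
      Sym2.mk_isDiag_iff, hP]
    constructor
    · rintro ⟨u', v', _, _, huv, hij, rfl, rfl⟩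
      rcases Sym2.eq_iff.1 huv with ⟨rfl, rfl⟩ | ⟨rfl, rfl⟩
      exacts [hij, Ne.symm hij]
    · exact fun h => ⟨u, v, _, _, rfl, h, rfl, rfl⟩

variable [DecidableEq V]

lemma isMultiwayCut_iff (ts : Fin k → V) (C : Finset (Sym2 V)) :
    IsMultiwayCut ts C ↔ ∃ f : V → Fin k, (∀ i, f (ts i) = i) ∧ C = labellingCut f := by
  constructor
  · rintro ⟨P, hdisj, hts, hcover, hC⟩
    have hpart : ∀ v, ∃ i, v ∈ P i := fun v => by simpa using eq_univ_iff_forall.1 hcover v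
    choose f hf using hpart
    have hP : ∀ v i, v ∈ P i ↔ f v = i := fun v i =>
      ⟨fun hv => by_contra fun hne => disjoint_left.1 (hdisj _ _ hne) (hf v) hv,
        fun h => h ▸ hf v⟩
    refine ⟨f, fun i => (hP _ _).1 (hts i), coe_injective ?_⟩
    rw [hC, setOf_crossing_eq_labellingCut P f hP]
  · rintro ⟨f, hf, rfl⟩
    refine ⟨fun i => univ.filter (f · = i), fun i j hij => ?_, fun i => by simp [hf], ?_,
      (setOf_crossing_eq_labellingCut _ f fun v i => by simp).symm⟩
    · exact disjoint_filter.2 fun v _ hi hj => hij (hi ▸ hj)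
    · ext v; simp

def multiwayCuts (ts : Fin k → V) : Finset (Finset (Sym2 V)) :=
  (univ.filter fun f : V → Fin k => ∀ i, f (ts i) = i).image labellingCut

lemma mem_multiwayCuts {ts : Fin k → V} {C : Finset (Sym2 V)} :
    C ∈ multiwayCuts ts ↔ IsMultiwayCut ts C := by
  simp [multiwayCuts, isMultiwayCut_iff, eq_comm]

lemma card_multiwayCuts_le (ts : Fin k → V) : (multiwayCuts ts).card ≤ k ^ Fintype.card V :=
  card_image_le.trans <| (card_filter_le _ _).trans (by simp)

lemma multiwayCuts_nonempty {ts : Fin k → V} (hts : Function.Injective ts) (hk : 0 < k) :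
    (multiwayCuts ts).Nonempty :=
  haveI := Fin.pos_iff_nonempty.1 hk
  ⟨_, mem_image_of_mem _ (mem_filter.2 ⟨mem_univ _, Function.leftInverse_invFun hts⟩)⟩

lemma exists_pairsWeight_eq_sInf {ts : Fin k → V} (hcuts : (multiwayCuts ts).Nonempty)
    (w : V → V → ℝ) :
    ∃ D, IsMultiwayCut ts D ∧
      pairsWeight w D = sInf {r : ℝ | ∃ D, IsMultiwayCut ts D ∧ r = pairsWeight w D} := by
  have hset : {r : ℝ | ∃ D, IsMultiwayCut ts D ∧ r = pairsWeight w D} =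
      ((multiwayCuts ts).image (pairsWeight w) : Set ℝ) := by
    ext r; simp [mem_multiwayCuts, eq_comm]
  rw [hset]
  simpa [mem_multiwayCuts] using (hcuts.image (pairsWeight w)).csInf_mem

end MultiwayCut

section Sensitivity

variable {V : Type} [Fintype V] [DecidableEq V]

lemma pairsWeight_sub (w w' : V → V → ℝ) (C : Finset (Sym2 V)) :
    pairsWeight w C - pairsWeight w' C = pairsWeight (w - w') C := by
  simp only [pairsWeight, ← mul_sub, ← sum_sub_distrib, Pi.sub_apply]
  congr 1
  refine sum_congr rfl fun u _ => sum_congr rfl fun v _ => ?_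
  split_ifs <;> simp

lemma abs_pairsWeight_le (d : V → V → ℝ) (C : Finset (Sym2 V)) :
    |pairsWeight d C| ≤ (1 / 2) * ∑ u, ∑ v, |d u v| := by
  rw [pairsWeight, abs_mul, abs_of_pos (by norm_num : (0 : ℝ) < 1 / 2)]
  gcongr
  refine (abs_sum_le_sum_abs _ _).trans (sum_le_sum fun u _ => ?_)
  refine (abs_sum_le_sum_abs _ _).trans (sum_le_sum fun v _ => ?_)
  split_ifs <;> simp

lemma Neighboring.sum_abs_sub_le {w w' : V → V → ℝ} (hw : ∀ u v, w u v = w v u)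
    (hw' : ∀ u v, w' u v = w' v u) (h : Neighboring w w') :
    ∑ u, ∑ v, |w u v - w' u v| ≤ 2 := by
  obtain ⟨a, b, hab, heq⟩ := h
  have hpt : ∀ u v, |w u v - w' u v| ≤
      (if u = a ∧ v = b then 1 else 0) + (if u = b ∧ v = a then 1 else 0) := by
    intro u v
    by_cases h₁ : u = a ∧ v = b
    · obtain ⟨rfl, rfl⟩ := h₁
      simp only [and_self, if_true]
      split_ifs <;> linarith
    by_cases h₂ : u = b ∧ v = a
    · obtain ⟨rfl, rfl⟩ := h₂
      rw [hw, hw', if_neg h₁, if_pos ⟨rfl, rfl⟩]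
      linarith
    rw [heq u v (not_or.2 ⟨h₁, h₂⟩), sub_self, abs_zero, if_neg h₁, if_neg h₂, add_zero]
  calc ∑ u, ∑ v, |w u v - w' u v|
      ≤ ∑ u, ∑ v, ((if u = a ∧ v = b then 1 else 0) + (if u = b ∧ v = a then 1 else 0)) :=
        sum_le_sum fun u _ => sum_le_sum fun v _ => hpt u v
    _ = 2 := by norm_num [sum_add_distrib, ite_and]

lemma abs_pairsWeight_sub_le_one {w w' : V → V → ℝ} (hw : ∀ u v, w u v = w v u)
    (hw' : ∀ u v, w' u v = w' v u) (h : Neighboring w w') (C : Finset (Sym2 V)) :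
    |pairsWeight w C - pairsWeight w' C| ≤ 1 := by
  rw [pairsWeight_sub]
  calc |pairsWeight (w - w') C| ≤ (1 / 2) * ∑ u, ∑ v, |(w - w') u v| := abs_pairsWeight_le _ C
    _ ≤ (1 / 2) * 2 := by gcongr; exact h.sum_abs_sub_le hw hw'
    _ = 1 := by norm_num

lemma pairsWeight_nonneg {w : V → V → ℝ} (hw : ∀ u v, 0 ≤ w u v) (C : Finset (Sym2 V)) :
    0 ≤ pairsWeight w C := by
  unfold pairsWeight
  refine mul_nonneg (by norm_num) (sum_nonneg fun u _ => sum_nonneg fun v _ => ?_)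
  split_ifs
  exacts [hw u v, le_rfl]

end Sensitivity

lemma pow_mul_exp_neg_two_mul_log_le_inv {n k : ℕ} (hn : 0 < n) (hk : 2 ≤ k) :
    (k : ℝ) ^ n * Real.exp (-(2 * n * Real.log k)) ≤ (n : ℝ)⁻¹ := by
  have hk₀ : (0 : ℝ) < k := by exact_mod_cast (by omega : 0 < k)
  have hexp : Real.exp (n * Real.log k) = (k : ℝ) ^ n := by
    rw [Real.exp_nat_mul, Real.exp_log hk₀]
  have hnk : (n : ℝ) ≤ (k : ℝ) ^ n := by
    exact_mod_cast (Nat.lt_two_pow_self).le.trans (Nat.pow_le_pow_left hk n)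
  have hexp₂ : Real.exp (-(2 * n * Real.log k)) = ((k : ℝ) ^ n * (k : ℝ) ^ n)⁻¹ := by
    rw [← hexp, ← Real.exp_add, ← Real.exp_neg]; ring_nf
  calc (k : ℝ) ^ n * Real.exp (-(2 * n * Real.log k))
      = (k : ℝ) ^ n * ((k : ℝ) ^ n * (k : ℝ) ^ n)⁻¹ := by rw [hexp₂]
    _ = ((k : ℝ) ^ n)⁻¹ := by field_simp
    _ ≤ (n : ℝ)⁻¹ := inv_anti₀ (by exact_mod_cast hn) hnk

lemma card_multiwayCuts_mul_exp_le {V : Type} [Fintype V] [DecidableEq V] {k : ℕ} {ε : ℝ}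
    (ts : Fin k → V) (hε : 0 < ε) (hV : 0 < Fintype.card V) (hk : 2 ≤ k) :
    ((multiwayCuts ts).card : ℝ≥0∞) *
        ENNReal.ofReal (Real.exp (-(ε / 2) * (4 * Fintype.card V * Real.log k / ε))) ≤
      ENNReal.ofReal (Fintype.card V : ℝ)⁻¹ := by
  have hexponent : -(ε / 2) * (4 * Fintype.card V * Real.log k / ε) =
      -(2 * Fintype.card V * Real.log k) := by
    field_simp; ring
  have hcard : ((multiwayCuts ts).card : ℝ) ≤ (k : ℝ) ^ Fintype.card V := by
    exact_mod_cast card_multiwayCuts_le ts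
  rw [hexponent, ← ENNReal.ofReal_natCast, ← ENNReal.ofReal_mul (by positivity)]
  exact ENNReal.ofReal_le_ofReal <| (mul_le_mul_of_nonneg_right hcard (Real.exp_nonneg _)).trans
    (pow_mul_exp_neg_two_mul_log_le_inv hV hk)

/-- For every `ε > 0`, `n ≥ 2`, `k ≥ 2` there is a randomized mechanism
mapping weighted graphs on a fixed `n`-element vertex set with `k` distinct terminals to
distributions over multiway `k`-cuts which (i) is `(ε, 0)`-differentially private w.r.t.
edge-neighboring graphs, and (ii) for some absolute constant `C`, on every input graph
outputs, with probability at least `1 − 1/n`, a multiway `k`-cut of weight at most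
`2·OPT + C·n·log(k)/ε`. -/
theorem dp_multiway_cut_exists (ε : ℝ) (hε : 0 < ε) (n k : ℕ) (hn : 2 ≤ n) (hk : 2 ≤ k)
    (V : Type) [Fintype V] [DecidableEq V] (hcard : Fintype.card V = n)
    (ts : Fin k → V) (hts : Function.Injective ts) :
    ∃ M : (V → V → ℝ) → PMF (Finset (Sym2 V)),
      -- (i) (ε, 0)-differential privacy
      (∀ w w' : V → V → ℝ, IsWeight w → IsWeight w' → Neighboring w w' →
        ∀ O : Set (Finset (Sym2 V)),
          (M w).toOuterMeasure O ≤ ENNReal.ofReal (Real.exp ε) * (M w').toOuterMeasure O) ∧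
      -- the output is always a multiway k-cut
      (∀ w : V → V → ℝ, IsWeight w → ∀ Cs ∈ (M w).support, IsMultiwayCut ts Cs) ∧
      -- (ii) accuracy with an absolute constant C
      (∃ C : ℝ, ∀ w : V → V → ℝ, IsWeight w →
        ENNReal.ofReal (1 - (n : ℝ)⁻¹) ≤
          (M w).toOuterMeasure {Cs : Finset (Sym2 V) |
            pairsWeight w Cs ≤
              2 * sInf {r : ℝ | ∃ D : Finset (Sym2 V), IsMultiwayCut ts D ∧ r = pairsWeight w D}
                + C * n * Real.log k / ε}) := by
  subst hcard
  have hcuts := multiwayCuts_nonempty hts (by omega : 0 < k)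
  refine ⟨fun w => expMechanism ε (multiwayCuts ts) hcuts (pairsWeight w), ?_, ?_, 4, ?_⟩
  · intro w w' hw hw' hww' O
    exact toOuterMeasure_expMechanism_le_of_abs_sub_le hε.le hcuts
      (fun C _ => abs_pairsWeight_sub_le_one hw.2.1 hw'.2.1 hww' C) O
  · intro w _ C hC
    exact mem_multiwayCuts.1 (support_expMechanism_subset hcuts hC)
  · intro w hw
    obtain ⟨D, hD, hDopt⟩ := exists_pairsWeight_eq_sInf hcuts w
    set t := 4 * (Fintype.card V : ℝ) * Real.log k / ε
    have hgood : {C | pairsWeight w C ≤ pairsWeight w D + t} ⊆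
        {C | pairsWeight w C ≤ 2 * sInf {r : ℝ | ∃ D, IsMultiwayCut ts D ∧ r = pairsWeight w D}
          + t} := by
      intro C hC
      have := pairsWeight_nonneg hw.1 D
      simp only [Set.mem_ofPred_eq, ← hDopt] at hC ⊢
      linarith
    calc ENNReal.ofReal (1 - (Fintype.card V : ℝ)⁻¹)
        = 1 - ENNReal.ofReal (Fintype.card V : ℝ)⁻¹ := by
          rw [ENNReal.ofReal_sub _ (by positivity), ENNReal.ofReal_one]
      _ ≤ 1 - (multiwayCuts ts).card * ENNReal.ofReal (Real.exp (-(ε / 2) * t)) :=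
          tsub_le_tsub_left (card_multiwayCuts_mul_exp_le ts hε (by omega) hk) 1
      _ ≤ _ := one_sub_le_toOuterMeasure_expMechanism_le hε.le hcuts (mem_multiwayCuts.2 hD) t
      _ ≤ _ := MeasureTheory.measure_mono hgood
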